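/- Let X be a type with a distinguished point x₀ : X. Define the universal chain U : ℕ → Type by U(0) = X and U(n+1) = (U(n) → X). Then for every n, U(n) is a coretract of U(n+1): there exist maps s_n : U(n) → U(n+1) and r_n : U(n+1) → U(n) with r_n ∘ s_n = id. -/
import Mathlib


/-- The universal chain over a type `X`: `U 0 = X`, `U (n+1) = (U n → X)`. -/
def UnivChain (X : Type u) : ℕ → Type u
  | 0 => X
  | n + 1 => UnivChain X n → X

/-- Embedding theorem for the universal chain: if `X` has a point `x₀`, then
every `U n` is a coretract of `U (n+1)`. -/
theorem univChain_coretract (X : Type u) (x₀ : X) (n : ℕ) :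
    ∃ (s : UnivChain X n → UnivChain X (n + 1))
      (r : UnivChain X (n + 1) → UnivChain X n), r ∘ s = id := by
  induction n with
  | zero =>
    exact ⟨fun x _ => x, fun g => g x₀, rfl⟩
  | succ m ih =>
    obtain ⟨s, r, hrs⟩ := ih
    refine ⟨fun f => f ∘ r, fun g => g ∘ s, ?_⟩
    funext f
    show f ∘ r ∘ s = f
    rw [hrs]
    rfl
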